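/- arXiv:1802.07142 — 7 statements merged into one kernel-verified Lean document; each statement's English description precedes it below -/
import Mathlib

section
/- For every finite subgraph G of the complete bipartite graph on vertex sets I × {male} and I × {female} (where I is a finite interval of integers, with preferences given by the total order on I, compatibility given by the edges of G, and any compatible partner preferred to being unmatched), there exists exactly one stable matching of G. -/
/-- `M` is a matching of the bipartite compatibility graph with male set `A`,
female set `B`, and compatibility relation `E` (males and females indexed by integers,
larger index = more attractive). -/
def IsBipMatching (E : ℤ → ℤ → Prop) (A B : Finset ℤ) (M : Finset (ℤ × ℤ)) : Prop :=
  (∀ e ∈ M, e.1 ∈ A ∧ e.2 ∈ B ∧ E e.1 e.2) ∧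
  (∀ e ∈ M, ∀ f ∈ M, e.1 = f.1 → e = f) ∧
  (∀ e ∈ M, ∀ f ∈ M, e.2 = f.2 → e = f)

/-- A matching is stable if there is no compatible pair `(i, j)` such that male `i` is
unmatched or matched to a female less attractive than `j`, and female `j` is unmatched or
matched to a male less attractive than `i` (the convention `-∞ < k` is encoded by
quantifying only over actual partners). -/
def IsStableBipMatching (E : ℤ → ℤ → Prop) (A B : Finset ℤ) (M : Finset (ℤ × ℤ)) : Prop :=
  IsBipMatching E A B M ∧
  ¬ ∃ i ∈ A, ∃ j ∈ B, E i j ∧ (∀ j', (i, j') ∈ M → j' < j) ∧ (∀ i', (i', j) ∈ M → i' < i)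

/-! The most attractive male `i` who has any compatible partner, together with his most
attractive compatible partner `j`, forms a pair that every stable matching must contain:
otherwise `(i, j)` would block it, since `j` is `i`'s best option and no male above `i`
is compatible with `j`. Removing `i` and `j` gives a smaller instance whose stable matchings
are exactly those of the original one with `(i, j)` removed, so existence and uniqueness
follow by induction on the number of males. -/

section StableMatching

variable {E : ℤ → ℤ → Prop} {A B : Finset ℤ} {M : Finset (ℤ × ℤ)} {i j : ℤ}

theorem IsBipMatching.erase (hM : IsBipMatching E A B M) (hij : (i, j) ∈ M) :
    IsBipMatching E (A.erase i) (B.erase j) (M.erase (i, j)) := by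
  obtain ⟨hmem, hfst, hsnd⟩ := hM
  refine ⟨fun e he => ?_,
    fun e he f hf => hfst e (Finset.mem_of_mem_erase he) f (Finset.mem_of_mem_erase hf),
    fun e he f hf => hsnd e (Finset.mem_of_mem_erase he) f (Finset.mem_of_mem_erase hf)⟩
  obtain ⟨hne, heM⟩ := Finset.mem_erase.mp he
  obtain ⟨hA, hB, hE⟩ := hmem e heM
  exact ⟨Finset.mem_erase.mpr ⟨fun h => hne (hfst e heM _ hij h), hA⟩,
    Finset.mem_erase.mpr ⟨fun h => hne (hsnd e heM _ hij h), hB⟩, hE⟩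

theorem IsBipMatching.insert (hM : IsBipMatching E (A.erase i) (B.erase j) M)
    (hi : i ∈ A) (hj : j ∈ B) (hE : E i j) :
    IsBipMatching E A B (insert (i, j) M) := by
  obtain ⟨hmem, hfst, hsnd⟩ := hM
  have hfst_ne : ∀ e ∈ M, e.1 ≠ i := fun e he => Finset.ne_of_mem_erase (hmem e he).1
  have hsnd_ne : ∀ e ∈ M, e.2 ≠ j := fun e he => Finset.ne_of_mem_erase (hmem e he).2.1
  refine ⟨fun e he => ?_, fun e he f hf h => ?_, fun e he f hf h => ?_⟩
  · rcases Finset.mem_insert.mp he with rfl | he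
    · exact ⟨hi, hj, hE⟩
    · obtain ⟨hA, hB, hE⟩ := hmem e he
      exact ⟨Finset.mem_of_mem_erase hA, Finset.mem_of_mem_erase hB, hE⟩
  · rcases Finset.mem_insert.mp he with rfl | he <;> rcases Finset.mem_insert.mp hf with rfl | hf
    · rfl
    · exact absurd h.symm (hfst_ne f hf)
    · exact absurd h (hfst_ne e he)
    · exact hfst e he f hf h
  · rcases Finset.mem_insert.mp he with rfl | he <;> rcases Finset.mem_insert.mp hf with rfl | hf
    · rfl
    · exact absurd h.symm (hsnd_ne f hf)
    · exact absurd h (hsnd_ne e he)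
    · exact hsnd e he f hf h

theorem IsStableBipMatching.erase (hM : IsStableBipMatching E A B M) (hij : (i, j) ∈ M) :
    IsStableBipMatching E (A.erase i) (B.erase j) (M.erase (i, j)) := by
  refine ⟨hM.1.erase hij, ?_⟩
  rintro ⟨x, hx, y, hy, hxy, hx_worse, hy_worse⟩
  obtain ⟨hxi, hxA⟩ := Finset.mem_erase.mp hx
  obtain ⟨hyj, hyB⟩ := Finset.mem_erase.mp hy
  refine hM.2 ⟨x, hxA, y, hyB, hxy, fun y' hy' => hx_worse y' ?_, fun x' hx' => hy_worse x' ?_⟩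
  · exact Finset.mem_erase.mpr ⟨fun h => hxi (congrArg Prod.fst h), hy'⟩
  · exact Finset.mem_erase.mpr ⟨fun h => hyj (congrArg Prod.snd h), hx'⟩

theorem isStableBipMatching_iff_eq_empty (h : ∀ i ∈ A, ∀ j ∈ B, ¬E i j) :
    IsStableBipMatching E A B M ↔ M = ∅ := by
  constructor
  · rintro ⟨⟨hmem, -, -⟩, -⟩
    refine Finset.eq_empty_of_forall_notMem fun e he => ?_
    obtain ⟨hA, hB, hE⟩ := hmem e he
    exact h _ hA _ hB hE
  · rintro rfl
    exact ⟨⟨by simp, by simp, by simp⟩, fun ⟨i, hi, j, hj, hE, _⟩ => h i hi j hj hE⟩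

structure IsTopPair (E : ℤ → ℤ → Prop) (A B : Finset ℤ) (i j : ℤ) : Prop where
  left_mem : i ∈ A
  right_mem : j ∈ B
  adj : E i j
  left_max : ∀ x ∈ A, ∀ y ∈ B, E x y → x ≤ i
  right_max : ∀ y ∈ B, E i y → y ≤ j

theorem exists_isTopPair (h : ∃ i ∈ A, ∃ j ∈ B, E i j) : ∃ i j, IsTopPair E A B i j := by
  classical
  obtain ⟨i, hi, hi_max⟩ := Finset.exists_max_image (A.filter fun x => ∃ y ∈ B, E x y) id <| by
    obtain ⟨i, hi, j, hj, hE⟩ := h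
    exact ⟨i, Finset.mem_filter.mpr ⟨hi, j, hj, hE⟩⟩
  obtain ⟨hiA, hi_adj⟩ := Finset.mem_filter.mp hi
  obtain ⟨j, hj, hj_max⟩ := Finset.exists_max_image (B.filter (E i)) id <| by
    obtain ⟨j, hj, hE⟩ := hi_adj
    exact ⟨j, Finset.mem_filter.mpr ⟨hj, hE⟩⟩
  obtain ⟨hjB, hE⟩ := Finset.mem_filter.mp hj
  exact ⟨i, j, hiA, hjB, hE,
    fun x hx y hy hxy => hi_max x (Finset.mem_filter.mpr ⟨hx, y, hy, hxy⟩),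
    fun y hy hiy => hj_max y (Finset.mem_filter.mpr ⟨hy, hiy⟩)⟩

theorem IsTopPair.mem_of_isStableBipMatching (hij : IsTopPair E A B i j)
    (hM : IsStableBipMatching E A B M) : (i, j) ∈ M := by
  by_contra hij_notMem
  refine hM.2 ⟨i, hij.left_mem, j, hij.right_mem, hij.adj, fun y hy => ?_, fun x hx => ?_⟩
  · obtain ⟨-, hyB, hiy⟩ := hM.1.1 _ hy
    exact (hij.right_max y hyB hiy).lt_of_ne (by rintro rfl; exact hij_notMem hy)
  · obtain ⟨hxA, -, hxj⟩ := hM.1.1 _ hx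
    exact (hij.left_max x hxA j hij.right_mem hxj).lt_of_ne (by rintro rfl; exact hij_notMem hx)

theorem IsTopPair.isStableBipMatching_insert (hij : IsTopPair E A B i j)
    (hM : IsStableBipMatching E (A.erase i) (B.erase j) M) :
    IsStableBipMatching E A B (insert (i, j) M) := by
  refine ⟨hM.1.insert hij.left_mem hij.right_mem hij.adj, ?_⟩
  rintro ⟨x, hx, y, hy, hxy, hx_worse, hy_worse⟩
  rcases eq_or_ne x i with rfl | hxi
  · exact (hij.right_max y hy hxy).not_gt (hx_worse j (Finset.mem_insert_self _ _))
  rcases eq_or_ne y j with rfl | hyj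
  · exact (hij.left_max x hx y hy hxy).not_gt (hy_worse i (Finset.mem_insert_self _ _))
  exact hM.2 ⟨x, Finset.mem_erase.mpr ⟨hxi, hx⟩, y, Finset.mem_erase.mpr ⟨hyj, hy⟩, hxy,
    fun y' hy' => hx_worse y' (Finset.mem_insert_of_mem hy'),
    fun x' hx' => hy_worse x' (Finset.mem_insert_of_mem hx')⟩

theorem existsUnique_isStableBipMatching (E : ℤ → ℤ → Prop) (A B : Finset ℤ) :
    ∃! M, IsStableBipMatching E A B M := by
  induction A using Finset.strongInduction generalizing B with
  | H A ih =>
  by_cases h : ∃ i ∈ A, ∃ j ∈ B, E i j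
  · obtain ⟨i, j, hij⟩ := exists_isTopPair h
    obtain ⟨M, hM, hM_unique⟩ := ih (A.erase i) (Finset.erase_ssubset hij.left_mem) (B.erase j)
    refine ⟨insert (i, j) M, hij.isStableBipMatching_insert hM, fun N hN => ?_⟩
    have hijN := hij.mem_of_isStableBipMatching hN
    rw [← Finset.insert_erase hijN, hM_unique _ (hN.erase hijN)]
  · push Not at h
    exact ⟨∅, (isStableBipMatching_iff_eq_empty h).2 rfl,
      fun M hM => (isStableBipMatching_iff_eq_empty h).1 hM⟩

end StableMatching

/-- For every subgraph (compatibility relation) of the complete bipartite graph on a finite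
integer interval `I = [a, b]`, there is exactly one stable matching. -/
theorem unique_stable_matching_finite_interval (a b : ℤ) (E : ℤ → ℤ → Prop) :
    ∃! M : Finset (ℤ × ℤ),
      IsStableBipMatching E (Finset.Icc a b) (Finset.Icc a b) M :=
  existsUnique_isStableBipMatching E _ _
end

section
/- Let p ∈ (0,1], q = 1-p, and let G be the random bipartite graph on {1,…,n} × {1,…,n} with each edge present independently with probability p. Conditional on the unique stable matching σ of G being perfect, σ is distributed according to the Mallows measure on S_n with parameter q; that is, for every permutation τ of {1,…,n}, P(σ = τ | σ perfect) is proportional to q^{inv(τ)}. -/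
/-!
Being a perfect stable matching `τ` is an event that fixes the state of each edge separately:
the `n` edges `(i, τ i)` must be present, and each potential blocking pair `(i, j)`, with
`τ i < j` and `τ⁻¹ j < i`, must be absent. Blocking pairs correspond to inversions of `τ`, so
by independence the event has probability `p ^ n * q ^ inv τ`. Two distinct permutations cannot
both be stable for the same graph (look at the largest male on whom they disagree), so the
probability of a perfect stable matching is `p ^ n * ∑ τ', q ^ inv τ'`.
-/

open MeasureTheory ProbabilityTheory

/-- The number of inversions of a permutation of `{1,…,n}` (represented as `Fin n`). -/
def invNum {n : ℕ} (τ : Equiv.Perm (Fin n)) : ℕ :=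
  (Finset.univ.filter fun p : Fin n × Fin n => p.1 < p.2 ∧ τ p.2 < τ p.1).card

/-- The event that the permutation `τ` is a (perfect) stable matching of the random
bipartite compatibility graph encoded by `C`: every pair `(i, τ i)` is compatible, and
there is no compatible pair `(i, j)` in which male `i` prefers `j` to his partner `τ i`
and female `j` prefers `i` to her partner `τ⁻¹ j`. -/
def stablePermEvent {Ω : Type*} {n : ℕ} (C : Fin n × Fin n → Ω → Bool)
    (τ : Equiv.Perm (Fin n)) : Set Ω :=
  {ω | (∀ i, C (i, τ i) ω = true) ∧
    ¬ ∃ i j, C (i, j) ω = true ∧ τ i < j ∧ τ.symm j < i}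

open Finset

section

variable {Ω : Type*} {n : ℕ}

def edgeConstraint (τ : Equiv.Perm (Fin n)) (e : Fin n × Fin n) : Set Bool :=
  if e.2 = τ e.1 then {true}
  else if τ e.1 < e.2 ∧ τ.symm e.2 < e.1 then {false}
  else Set.univ

lemma stablePermEvent_eq_iInter (C : Fin n × Fin n → Ω → Bool) (τ : Equiv.Perm (Fin n)) :
    stablePermEvent C τ = ⋂ e, C e ⁻¹' edgeConstraint τ e := by
  ext ω
  simp only [stablePermEvent, Set.mem_iInter, Set.mem_preimage, edgeConstraint]
  constructor
  · rintro ⟨hmatched, hunblocked⟩ ⟨i, j⟩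
    by_cases hj : j = τ i
    · subst hj; simpa using hmatched i
    · by_cases hblock : τ i < j ∧ τ.symm j < i
      · simp only [hj, hblock, if_false]
        cases hC : C (i, j) ω
        · rfl
        · exact absurd ⟨i, j, hC, hblock⟩ hunblocked
      · simp [hj, hblock]
  · intro h
    refine ⟨fun i => by simpa using h (i, τ i), ?_⟩
    rintro ⟨i, j, hC, hlt, hlt'⟩
    have hj : j ≠ τ i := by rintro rfl; exact lt_irrefl _ hlt
    simpa [hj, hlt, hlt', hC] using h (i, j)

lemma measurableSet_stablePermEvent [MeasurableSpace Ω] {C : Fin n × Fin n → Ω → Bool}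
    (hmeas : ∀ e, Measurable (C e)) (τ : Equiv.Perm (Fin n)) :
    MeasurableSet (stablePermEvent C τ) := by
  rw [stablePermEvent_eq_iInter]
  exact .iInter fun e => hmeas e .of_discrete

lemma card_filter_eq_apply (τ : Equiv.Perm (Fin n)) :
    #{e : Fin n × Fin n | e.2 = τ e.1} = n := by
  have : ({e : Fin n × Fin n | e.2 = τ e.1} : Finset _) =
      univ.map ⟨fun i => (i, τ i), fun i i' h => congrArg Prod.fst h⟩ := by
    ext ⟨i, j⟩
    simp only [mem_filter, mem_univ, true_and, mem_map]
    exact ⟨fun h => ⟨i, by rw [h]; rfl⟩, by rintro ⟨a, ⟨⟩⟩; rfl⟩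
  rw [this, card_map, card_univ, Fintype.card_fin]

lemma card_blockingPairs_eq_invNum (τ : Equiv.Perm (Fin n)) :
    #{e : Fin n × Fin n | ¬ e.2 = τ e.1 ∧ τ e.1 < e.2 ∧ τ.symm e.2 < e.1} = invNum τ := by
  -- the blocking pair `(i, j)` is the inversion `(τ⁻¹ j, i)`
  refine card_bij (fun e _ => (τ.symm e.2, e.1)) ?_ ?_ ?_
  · rintro ⟨i, j⟩ he
    simp only [mem_filter, mem_univ, true_and] at he ⊢
    exact ⟨he.2.2, by simpa using he.2.1⟩
  · rintro ⟨i, j⟩ - ⟨i', j'⟩ - h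
    simp only [Prod.mk.injEq] at h
    obtain ⟨hj, rfl⟩ := h
    exact Prod.ext rfl (τ.symm.injective hj)
  · rintro ⟨a, b⟩ hab
    simp only [mem_filter, mem_univ, true_and] at hab
    refine ⟨(b, τ a), ?_, by simp⟩
    simp only [mem_filter, mem_univ, true_and, Equiv.symm_apply_apply]
    exact ⟨fun h => hab.1.ne (τ.injective h), hab.2, hab.1⟩

lemma measure_stablePermEvent [MeasurableSpace Ω] (μ : Measure Ω) [IsProbabilityMeasure μ]
    {C : Fin n × Fin n → Ω → Bool} (hmeas : ∀ e, Measurable (C e)) (hind : iIndepFun C μ)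
    {r : ENNReal} (hBer : ∀ e, μ {ω | C e ω = true} = r) (τ : Equiv.Perm (Fin n)) :
    μ (stablePermEvent C τ) = r ^ n * (1 - r) ^ invNum τ := by
  have hfactor : ∀ e, μ (C e ⁻¹' edgeConstraint τ e) =
      if e.2 = τ e.1 then r
      else if τ e.1 < e.2 ∧ τ.symm e.2 < e.1 then 1 - r else 1 := by
    intro e
    have htrue : C e ⁻¹' {true} = {ω | C e ω = true} := rfl
    have hfalse : C e ⁻¹' {false} = (C e ⁻¹' {true})ᶜ := by
      ext ω; simp
    unfold edgeConstraint
    split_ifs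
    · rw [htrue, hBer]
    · rw [hfalse, prob_compl_eq_one_sub (hmeas e .of_discrete), htrue, hBer]
    · rw [Set.preimage_univ, measure_univ]
  rw [stablePermEvent_eq_iInter, show (⋂ e, C e ⁻¹' edgeConstraint τ e) =
      ⋂ e ∈ univ, C e ⁻¹' edgeConstraint τ e by simp,
    hind.measure_inter_preimage_eq_mul univ fun _ _ => .of_discrete,
    prod_congr rfl fun e _ => hfactor e, prod_ite, prod_const, card_filter_eq_apply,
    prod_ite, prod_const, prod_const_one, mul_one, filter_filter,
    card_blockingPairs_eq_invNum]

lemma exists_lt_apply_ne_of_apply_lt {C : Fin n × Fin n → Ω → Bool} {τ τ' : Equiv.Perm (Fin n)}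
    {ω : Ω} (hτ : ω ∈ stablePermEvent C τ) (hτ' : ω ∈ stablePermEvent C τ') {i : Fin n}
    (hlt : τ i < τ' i) : ∃ k, i < k ∧ τ k ≠ τ' k := by
  -- `(i, τ' i)` is compatible, so it is not blocking for `τ`: the `τ`-partner `k` of the
  -- female `τ' i` is a male above `i`, and `τ' k ≠ τ' i = τ k`
  have hnot_lt : ¬ τ.symm (τ' i) < i := fun h => hτ.2 ⟨i, τ' i, hτ'.1 i, hlt, h⟩
  have hne : τ.symm (τ' i) ≠ i := by
    intro h
    rw [Equiv.symm_apply_eq] at h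
    exact lt_irrefl _ (h ▸ hlt)
  refine ⟨τ.symm (τ' i), lt_of_le_of_ne (not_lt.1 hnot_lt) hne.symm, fun h => hne ?_⟩
  exact τ'.injective (by rw [← h, Equiv.apply_symm_apply])

lemma eq_of_mem_stablePermEvent {C : Fin n × Fin n → Ω → Bool} {τ τ' : Equiv.Perm (Fin n)}
    {ω : Ω} (hτ : ω ∈ stablePermEvent C τ) (hτ' : ω ∈ stablePermEvent C τ') : τ = τ' := by
  by_contra hne
  have hdisagree : ({i | τ i ≠ τ' i} : Finset (Fin n)).Nonempty := by
    obtain ⟨i, hi⟩ := not_forall.1 (mt Equiv.ext hne)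
    exact ⟨i, by simpa using hi⟩
  obtain ⟨i, hi, hmax⟩ := exists_max_image _ id hdisagree
  simp only [mem_filter, mem_univ, true_and, id] at hi hmax
  obtain ⟨k, hik, hk⟩ := hi.lt_or_gt.elim (exists_lt_apply_ne_of_apply_lt hτ hτ')
    fun h => (exists_lt_apply_ne_of_apply_lt hτ' hτ h).imp fun _ hk => ⟨hk.1, hk.2.symm⟩
  exact (hmax k hk).not_gt hik

lemma measure_setOf_exists_stablePermEvent [MeasurableSpace Ω] (μ : Measure Ω)
    {C : Fin n × Fin n → Ω → Bool} (hmeas : ∀ e, Measurable (C e)) :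
    μ {ω | ∃ τ, ω ∈ stablePermEvent C τ} = ∑ τ, μ (stablePermEvent C τ) := by
  simp only [Set.ofPred_exists, Set.ofPred_mem_eq]
  rw [measure_iUnion ?_ (measurableSet_stablePermEvent hmeas), tsum_fintype]
  exact fun τ τ' hne => Set.disjoint_left.2 fun ω hτ hτ' => hne (eq_of_mem_stablePermEvent hτ hτ')

end

/-- Conditional on the unique stable matching of the random bipartite graph being perfect,
it is Mallows distributed: `P(σ = τ ∧ perfect) · ∑_{τ'} q^{inv τ'} = q^{inv τ} · P(perfect)`,
i.e. `P(σ = τ | perfect)` is proportional to `q^{inv τ}`. -/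
theorem stable_matching_conditioned_is_mallows
    {Ω : Type*} [MeasurableSpace Ω] (μ : Measure Ω) [IsProbabilityMeasure μ]
    (p q : ℝ) (hp0 : 0 < p) (hp1 : p ≤ 1) (hq : q = 1 - p) (n : ℕ)
    (C : Fin n × Fin n → Ω → Bool) (hmeas : ∀ e, Measurable (C e))
    (hind : iIndepFun C μ)
    (hBer : ∀ e, μ {ω | C e ω = true} = ENNReal.ofReal p)
    (τ : Equiv.Perm (Fin n)) :
    (μ (stablePermEvent C τ)).toReal * (∑ τ' : Equiv.Perm (Fin n), q ^ invNum τ')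
      = q ^ invNum τ * (μ {ω | ∃ τ' : Equiv.Perm (Fin n), ω ∈ stablePermEvent C τ'}).toReal := by
  have hq0 : 0 ≤ q := by linarith
  have hprob : ∀ τ', (μ (stablePermEvent C τ')).toReal = p ^ n * q ^ invNum τ' := by
    intro τ'
    rw [measure_stablePermEvent μ hmeas hind hBer, ← ENNReal.ofReal_one,
      ← ENNReal.ofReal_sub _ hp0.le, ← hq, ENNReal.toReal_mul, ENNReal.toReal_pow,
      ENNReal.toReal_pow, ENNReal.toReal_ofReal hp0.le, ENNReal.toReal_ofReal hq0]
  rw [measure_setOf_exists_stablePermEvent μ hmeas,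
    ENNReal.toReal_sum fun τ' _ => measure_ne_top μ _, hprob]
  simp_rw [hprob, ← mul_sum]
  ring
end

section
/- For any permutation τ of {1,…,n}, the unconditioned probability that the unique stable matching σ of the random bipartite graph G (each of the n² edges present independently with probability p = 1-q) equals τ is exactly q^{inv(τ)} (1-q)^n. -/
/-!
The permutation `τ` is the stable matching exactly when every edge `(i, τ i)` is present and
every blocking pair `(i, j)` (with `τ i < j` and `τ⁻¹ j < i`) is absent. There are `n` edges of
the first kind and `inv τ` of the second, all distinct, so independence of the edges gives
`p ^ n * q ^ inv τ`.
-/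

open MeasureTheory ProbabilityTheory

section Bernoulli

variable {ι Ω : Type*} [MeasurableSpace Ω] {μ : Measure Ω} [IsProbabilityMeasure μ]
  {C : ι → Ω → Bool} {p : ℝ}

lemma measure_eq_false_of_measure_eq_true (hp : 0 ≤ p) {e : ι} (hmeas : Measurable (C e))
    (hBer : μ {ω | C e ω = true} = ENNReal.ofReal p) :
    μ {ω | C e ω = false} = ENNReal.ofReal (1 - p) := by
  have hcompl : {ω | C e ω = false} = {ω | C e ω = true}ᶜ := by
    ext ω; simp
  have htrue : MeasurableSet {ω | C e ω = true} := hmeas (measurableSet_singleton true)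
  rw [hcompl, prob_compl_eq_one_sub htrue, hBer,
    ENNReal.ofReal_sub _ hp, ENNReal.ofReal_one]

lemma measure_forall_true_and_forall_false (hp : 0 ≤ p) (hmeas : ∀ e, Measurable (C e))
    (hind : iIndepFun C μ) (hBer : ∀ e, μ {ω | C e ω = true} = ENNReal.ofReal p)
    {A B : Finset ι} (hAB : Disjoint A B) :
    μ {ω | (∀ e ∈ A, C e ω = true) ∧ ∀ e ∈ B, C e ω = false} =
      ENNReal.ofReal p ^ A.card * ENNReal.ofReal (1 - p) ^ B.card := by
  classical
  set S : ι → Set Bool := fun e => if e ∈ A then {true} else {false}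
  have hevent : {ω | (∀ e ∈ A, C e ω = true) ∧ ∀ e ∈ B, C e ω = false} =
      ⋂ e ∈ A ∪ B, C e ⁻¹' S e := by
    ext ω
    simp only [Set.mem_ofPred_eq, Set.mem_iInter, Finset.mem_union, Set.mem_preimage]
    constructor
    · rintro ⟨hA, hB⟩ e (he | he)
      · simpa [S, he] using hA e he
      · simpa [S, Finset.disjoint_right.mp hAB he] using hB e he
    · intro h
      refine ⟨fun e he => ?_, fun e he => ?_⟩
      · simpa [S, he] using h e (.inl he)
      · simpa [S, Finset.disjoint_right.mp hAB he] using h e (.inr he)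
  rw [hevent, hind.measure_inter_preimage_eq_mul _ fun _ _ => trivial, Finset.prod_union hAB,
    Finset.prod_congr rfl fun e he => (show μ (C e ⁻¹' S e) = ENNReal.ofReal p by
      simp only [S, if_pos he]; exact hBer e),
    Finset.prod_congr rfl fun e he => (show μ (C e ⁻¹' S e) = ENNReal.ofReal (1 - p) by
      simp only [S, if_neg (Finset.disjoint_right.mp hAB he)]
      exact measure_eq_false_of_measure_eq_true hp (hmeas e) (hBer e)),
    Finset.prod_const, Finset.prod_const]

end Bernoulli

section StableMatching

variable {n : ℕ} (τ : Equiv.Perm (Fin n))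

def matchedPairs : Finset (Fin n × Fin n) :=
  Finset.univ.image fun i => (i, τ i)

/-- Both sides prefer larger indices, so `(i, j)` blocks `τ` when each prefers the other to
its partner. -/
def blockingPairs : Finset (Fin n × Fin n) :=
  Finset.univ.filter fun e => τ e.1 < e.2 ∧ τ.symm e.2 < e.1

lemma card_matchedPairs : (matchedPairs τ).card = n := by
  rw [matchedPairs, Finset.card_image_of_injective _ fun _ _ h => (Prod.mk.inj h).1,
    Finset.card_univ, Fintype.card_fin]

lemma card_blockingPairs : (blockingPairs τ).card = invNum τ :=
  Finset.card_nbij' (fun e => (τ.symm e.2, e.1)) (fun e => (e.2, τ e.1))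
    (by rintro ⟨i, j⟩; simp [blockingPairs, and_comm])
    (by rintro ⟨i, j⟩; simp [blockingPairs, and_comm])
    (by rintro ⟨i, j⟩ -; simp) (by rintro ⟨i, j⟩ -; simp)

lemma disjoint_matchedPairs_blockingPairs : Disjoint (matchedPairs τ) (blockingPairs τ) := by
  simp [Finset.disjoint_left, matchedPairs, blockingPairs]

lemma stablePermEvent_eq {Ω : Type*} (C : Fin n × Fin n → Ω → Bool) :
    stablePermEvent C τ = {ω | (∀ e ∈ matchedPairs τ, C e ω = true) ∧
      ∀ e ∈ blockingPairs τ, C e ω = false} := by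
  ext ω
  simp only [stablePermEvent, matchedPairs, blockingPairs, Set.mem_ofPred_eq,
    Finset.forall_mem_image, Finset.mem_univ, Finset.mem_filter, true_and, Prod.forall,
    ← Bool.not_eq_true, not_exists, not_and, forall_const]
  grind

end StableMatching

/-- For any permutation `τ` of `{1,…,n}`, the probability that the unique stable matching
of the random bipartite graph (edges present independently with probability `p = 1 - q`)
equals `τ` is exactly `q^{inv τ} (1-q)^n`. -/
theorem prob_stable_matching_eq_perm
    {Ω : Type*} [MeasurableSpace Ω] (μ : Measure Ω) [IsProbabilityMeasure μ]
    (p q : ℝ) (hp0 : 0 < p) (hp1 : p ≤ 1) (hq : q = 1 - p) (n : ℕ)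
    (C : Fin n × Fin n → Ω → Bool) (hmeas : ∀ e, Measurable (C e))
    (hind : iIndepFun C μ)
    (hBer : ∀ e, μ {ω | C e ω = true} = ENNReal.ofReal p)
    (τ : Equiv.Perm (Fin n)) :
    μ (stablePermEvent C τ) = ENNReal.ofReal (q ^ invNum τ * (1 - q) ^ n) := by
  subst hq
  rw [stablePermEvent_eq, measure_forall_true_and_forall_false hp0.le hmeas hind hBer
    (disjoint_matchedPairs_blockingPairs τ), card_matchedPairs, card_blockingPairs,
    sub_sub_cancel, ENNReal.ofReal_mul (pow_nonneg (sub_nonneg.mpr hp1) _),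
    ENNReal.ofReal_pow hp0.le, ENNReal.ofReal_pow (sub_nonneg.mpr hp1), mul_comm]
end

section
/- Let p = 1-q ∈ (0,1] and consider the random bipartite graph in which, for each pair (a,b) ∈ ℤ × ℤ, the male a and female b are compatible independently with probability p. For any finite nonempty sets A, B, A', B' ⊆ ℤ with |A| = |B| and |A'| = |B'|, the probability that the unique stable matchings σ_{A,B} of the induced compatibility graph on A × {male} ∪ B × {female} and σ_{A',B'} of the induced graph on A' × {male} ∪ B' × {female} are both perfect is at least ∏_{k=1}^{|A|} (1 - q^k) · ∏_{k=1}^{|A'|} (1 - q^k). -/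
open MeasureTheory ProbabilityTheory

/-- A matching is perfect if every male in `A` and every female in `B` is matched. -/
def IsPerfectBipMatching (A B : Finset ℤ) (M : Finset (ℤ × ℤ)) : Prop :=
  (∀ i ∈ A, ∃ j, (i, j) ∈ M) ∧ (∀ j ∈ B, ∃ i, (i, j) ∈ M)

/-!
The greedy procedure only ever looks at the row of the largest remaining male: it succeeds on
`(A, B)` iff the largest male `a` of `A` has a compatible partner in `B` and it then succeeds on
the other rows. Let `a` be the largest male of `A ∪ A'` and condition on his row. Whether `a` finds
a partner in `B` and whether he finds one in `B'` are increasing events of that row, of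
probabilities `1 - q^|B|` and `1 - q^|B'|`, so by Harris' inequality both happen with probability
at least the product. What remains of the two runs is a pair of greedy runs on the other rows,
which are independent of the row of `a`, and induction on `|A| + |A'|` applies to them.
-/

open Finset

namespace StableMatching

section Greedy

variable {E E' : ℤ → ℤ → Prop} {a b : ℤ} {A B : Finset ℤ}

open scoped Classical in
noncomputable def partners (E : ℤ → ℤ → Prop) (a : ℤ) (B : Finset ℤ) : Finset ℤ :=
  B.filter (E a)

theorem mem_partners {j : ℤ} : j ∈ partners E a B ↔ j ∈ B ∧ E a j := by
  classical
  simp [partners]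

theorem partners_congr (h : ∀ j ∈ B, E a j ↔ E' a j) : partners E a B = partners E' a B := by
  ext j
  simp only [mem_partners]
  exact ⟨fun ⟨hj, hE⟩ => ⟨hj, (h j hj).1 hE⟩, fun ⟨hj, hE⟩ => ⟨hj, (h j hj).2 hE⟩⟩

/-- `σ_{A,B}` is perfect: the largest male of `A` takes his largest compatible partner in `B`,
and the procedure goes on with the others. -/
def GreedyPerfect (E : ℤ → ℤ → Prop) (A B : Finset ℤ) : Prop :=
  if h : A.Nonempty then
    ∃ hb : (partners E (A.max' h) B).Nonempty,
      GreedyPerfect E (A.erase (A.max' h)) (B.erase ((partners E (A.max' h) B).max' hb))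
  else True
termination_by A.card
decreasing_by exact card_erase_lt_of_mem (A.max'_mem h)

theorem greedyPerfect_empty (E : ℤ → ℤ → Prop) (B : Finset ℤ) : GreedyPerfect E ∅ B := by
  rw [GreedyPerfect]
  simp

theorem greedyPerfect_iff_of_isGreatest (ha : IsGreatest A a) :
    GreedyPerfect E A B ↔ ∃ hb : (partners E a B).Nonempty,
      GreedyPerfect E (A.erase a) (B.erase ((partners E a B).max' hb)) := by
  have hA : A.Nonempty := ⟨a, ha.1⟩
  obtain rfl : A.max' hA = a := le_antisymm (A.max'_le _ _ ha.2) (A.le_max' _ ha.1)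
  rw [GreedyPerfect, dif_pos hA]

theorem greedyPerfect_congr (h : ∀ i ∈ A, ∀ j ∈ B, E i j ↔ E' i j) :
    GreedyPerfect E A B ↔ GreedyPerfect E' A B := by
  induction A using Finset.strongInduction generalizing B with
  | H A ih =>
    obtain rfl | hA := A.eq_empty_or_nonempty
    · simp only [greedyPerfect_empty]
    have ha := A.isGreatest_max' hA
    rw [greedyPerfect_iff_of_isGreatest ha, greedyPerfect_iff_of_isGreatest ha,
      partners_congr (h _ ha.1)]
    refine exists_congr fun hb => ih _ (erase_ssubset ha.1) fun i hi j hj => ?_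
    exact h i (mem_of_mem_erase hi) j (mem_of_mem_erase hj)

variable {M : Finset (ℤ × ℤ)}

theorem isBipMatching_insert (hM : IsBipMatching E (A.erase a) (B.erase b) M) (ha : a ∈ A)
    (hb : b ∈ B) (hab : E a b) : IsBipMatching E A B (insert (a, b) M) := by
  obtain ⟨hedge, hinj₁, hinj₂⟩ := hM
  simp only [IsBipMatching, mem_insert, forall_eq_or_imp]
  refine ⟨⟨⟨ha, hb, hab⟩, fun e he => ?_⟩,
    ⟨⟨fun _ => trivial, fun f hf h => ?_⟩, fun e he => ⟨fun h => ?_, hinj₁ e he⟩⟩,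
    ⟨⟨fun _ => trivial, fun f hf h => ?_⟩, fun e he => ⟨fun h => ?_, hinj₂ e he⟩⟩⟩
  · obtain ⟨h₁, h₂, h₃⟩ := hedge e he
    exact ⟨mem_of_mem_erase h₁, mem_of_mem_erase h₂, h₃⟩
  · simpa [h] using (hedge f hf).1
  · simpa [h] using (hedge e he).1
  · simpa [h] using (hedge f hf).2.1
  · simpa [h] using (hedge e he).2.1

theorem isStableBipMatching_insert (hM : IsStableBipMatching E (A.erase a) (B.erase b) M)
    (ha : IsGreatest A a) (hb : IsGreatest (partners E a B) b) :
    IsStableBipMatching E A B (insert (a, b) M) := by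
  obtain ⟨hbB, hab⟩ := mem_partners.1 hb.1
  refine ⟨isBipMatching_insert hM.1 ha.1 hbB hab, ?_⟩
  rintro ⟨i, hi, j, hj, hij, hi_prefers, hj_prefers⟩
  by_cases hia : i = a
  · subst hia
    exact (hi_prefers b (mem_insert_self _ _)).not_ge (hb.2 (mem_partners.2 ⟨hj, hij⟩))
  by_cases hjb : j = b
  · subst hjb
    exact (hj_prefers a (mem_insert_self _ _)).not_ge (ha.2 hi)
  exact hM.2 ⟨i, mem_erase.2 ⟨hia, hi⟩, j, mem_erase.2 ⟨hjb, hj⟩, hij,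
    fun j' h => hi_prefers j' (mem_insert_of_mem h),
    fun i' h => hj_prefers i' (mem_insert_of_mem h)⟩

theorem isPerfectBipMatching_insert (hM : IsPerfectBipMatching (A.erase a) (B.erase b) M) :
    IsPerfectBipMatching A B (insert (a, b) M) := by
  refine ⟨fun i _ => ?_, fun j _ => ?_⟩
  · by_cases hia : i = a
    · exact ⟨b, hia ▸ mem_insert_self _ _⟩
    obtain ⟨j, hj⟩ := hM.1 i (mem_erase.2 ⟨hia, ‹_›⟩)
    exact ⟨j, mem_insert_of_mem hj⟩
  · by_cases hjb : j = b
    · exact ⟨a, hjb ▸ mem_insert_self _ _⟩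
    obtain ⟨i, hi⟩ := hM.2 j (mem_erase.2 ⟨hjb, ‹_›⟩)
    exact ⟨i, mem_insert_of_mem hi⟩

theorem exists_isStable_isPerfect_of_greedyPerfect (hAB : #A = #B) (h : GreedyPerfect E A B) :
    ∃ M, IsStableBipMatching E A B M ∧ IsPerfectBipMatching A B M := by
  induction A using Finset.strongInduction generalizing B with
  | H A ih =>
    obtain rfl | hA := A.eq_empty_or_nonempty
    · obtain rfl : B = ∅ := card_eq_zero.1 (by simp [← hAB])
      exact ⟨∅, ⟨⟨by simp, by simp, by simp⟩, by simp⟩, by simp, by simp⟩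
    have ha := A.isGreatest_max' hA
    obtain ⟨hne, hrest⟩ := (greedyPerfect_iff_of_isGreatest ha).1 h
    have hb := (partners E _ B).isGreatest_max' hne
    have hbB := (mem_partners.1 hb.1).1
    obtain ⟨M, hstable, hperfect⟩ := ih _ (erase_ssubset ha.1)
      (by rw [card_erase_of_mem ha.1, card_erase_of_mem hbB, hAB]) hrest
    exact ⟨_, isStableBipMatching_insert hstable ha hb, isPerfectBipMatching_insert hperfect⟩

noncomputable def remainingFemales (E : ℤ → ℤ → Prop) (a : ℤ) (A B : Finset ℤ) : Finset ℤ :=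
  if h : a ∈ A ∧ (partners E a B).Nonempty then B.erase ((partners E a B).max' h.2) else B

theorem remainingFemales_congr (h : partners E a B = partners E' a B) :
    remainingFemales E a A B = remainingFemales E' a A B := by
  unfold remainingFemales
  simp only [h]

theorem remainingFemales_subset : remainingFemales E a A B ⊆ B := by
  unfold remainingFemales
  split_ifs
  exacts [erase_subset _ _, subset_rfl]

theorem card_remainingFemales (hAB : #A = #B) (h : a ∈ A → (partners E a B).Nonempty) :
    #(remainingFemales E a A B) = #(A.erase a) := by
  by_cases ha : a ∈ A
  · have hb := h ha
    rw [remainingFemales, dif_pos ⟨ha, hb⟩, card_erase_of_mem (mem_partners.1 (max'_mem _ hb)).1,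
      card_erase_of_mem ha, hAB]
  · rw [remainingFemales, dif_neg (ha ·.1), erase_eq_of_notMem ha, hAB]

theorem greedyPerfect_iff_remainingFemales (ha : a ∈ upperBounds (A : Set ℤ))
    (hE : ∀ i ≠ a, ∀ j, E i j ↔ E' i j) :
    GreedyPerfect E A B ↔ (a ∈ A → (partners E a B).Nonempty) ∧
      GreedyPerfect E' (A.erase a) (remainingFemales E a A B) := by
  have hcongr : ∀ B', GreedyPerfect E (A.erase a) B' ↔ GreedyPerfect E' (A.erase a) B' :=
    fun B' => greedyPerfect_congr fun i hi j _ => hE i (ne_of_mem_erase hi) j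
  by_cases haA : a ∈ A
  · rw [greedyPerfect_iff_of_isGreatest ⟨haA, ha⟩]
    constructor
    · rintro ⟨hb, h⟩
      rw [remainingFemales, dif_pos ⟨haA, hb⟩, ← hcongr]
      exact ⟨fun _ => hb, h⟩
    · rintro ⟨hb, h⟩
      rw [remainingFemales, dif_pos ⟨haA, hb haA⟩, ← hcongr] at h
      exact ⟨hb haA, h⟩
  · rw [remainingFemales, dif_neg (haA ·.1), ← hcongr, erase_eq_of_notMem haA]
    exact (and_iff_right fun h => absurd h haA).symm

end Greedy

section Bernoulli

variable {α : Type*} [DecidableEq α] {p q : ℝ} {T R : Finset α} {P Q : Finset α → Prop}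

def bernoulliWeight (p q : ℝ) (T x : Finset α) : ℝ := ∏ e ∈ T, if e ∈ x then p else q

open scoped Classical in
/-- The probability that a random subset of `T`, containing each element independently with
probability `p`, satisfies `P`, when `q = 1 - p`. -/
noncomputable def bernoulliProb (p q : ℝ) (T : Finset α) (P : Finset α → Prop) : ℝ :=
  ∑ x ∈ T.powerset with P x, bernoulliWeight p q T x

theorem bernoulliWeight_nonneg (hp : 0 ≤ p) (hq : 0 ≤ q) (T x : Finset α) :
    0 ≤ bernoulliWeight p q T x :=
  prod_nonneg fun e _ => by split_ifs <;> assumption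

theorem bernoulliProb_nonneg (hp : 0 ≤ p) (hq : 0 ≤ q) (T : Finset α) (P : Finset α → Prop) :
    0 ≤ bernoulliProb p q T P :=
  sum_nonneg fun x _ => bernoulliWeight_nonneg hp hq T x

theorem bernoulliProb_congr (h : ∀ x ⊆ T, P x ↔ Q x) :
    bernoulliProb p q T P = bernoulliProb p q T Q := by
  classical
  exact sum_congr (filter_congr fun x hx => h x (mem_powerset.1 hx)) fun _ _ => rfl

theorem bernoulliProb_true (hpq : p + q = 1) (T : Finset α) :
    bernoulliProb p q T (fun _ => True) = 1 := by
  have hweight : ∀ x ∈ T.powerset, bernoulliWeight p q T x = (∏ _ ∈ x, p) * ∏ _ ∈ T \ x, q := by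
    intro x hx
    rw [bernoulliWeight, prod_ite, filter_mem_eq_inter, inter_eq_right.2 (mem_powerset.1 hx),
      filter_not, filter_mem_eq_inter, inter_eq_right.2 (mem_powerset.1 hx)]
  rw [bernoulliProb, filter_true, sum_congr rfl hweight, ← prod_add, hpq, prod_const_one]

theorem bernoulliWeight_union {y z : Finset α} (hRT : R ⊆ T) (hy : y ⊆ R) (hz : z ⊆ T \ R) :
    bernoulliWeight p q T (y ∪ z) = bernoulliWeight p q R y * bernoulliWeight p q (T \ R) z := by
  rw [bernoulliWeight, ← prod_sdiff hRT, mul_comm]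
  congr 1 <;> refine prod_congr rfl fun e he => ?_
  · have : e ∉ z := fun h => (mem_sdiff.1 (hz h)).2 he
    simp [this]
  · have : e ∉ y := fun h => (mem_sdiff.1 he).2 (hy h)
    simp [this]

theorem sum_powerset_eq_sum_powerset_sdiff {β : Type*} [AddCommMonoid β] (hRT : R ⊆ T)
    (f : Finset α → β) :
    ∑ x ∈ T.powerset, f x = ∑ y ∈ R.powerset, ∑ z ∈ (T \ R).powerset, f (y ∪ z) := by
  rw [← sum_product', ← union_sdiff_of_subset hRT, powerset_union, ← image_sup_product,
    sum_image, union_sdiff_of_subset hRT]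
  · rfl
  have hsplit : ∀ {y z : Finset α}, y ⊆ R → z ⊆ T \ R → (y ∪ z) ∩ R = y ∧ (y ∪ z) \ R = z := by
    intro y z hy hz
    have hzR := disjoint_of_subset_left hz disjoint_sdiff_self_left
    rw [union_inter_distrib_right, inter_eq_left.2 hy, disjoint_iff_inter_eq_empty.1 hzR,
      union_empty, union_sdiff_distrib, sdiff_eq_empty_iff_subset.2 hy, empty_union,
      sdiff_eq_self_of_disjoint hzR]
    exact ⟨rfl, rfl⟩
  rintro ⟨y, z⟩ hyz ⟨y', z'⟩ hyz' h
  simp only [coe_product, Set.mem_prod, mem_coe, mem_powerset] at hyz hyz'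
  obtain ⟨hy, hz⟩ := hsplit hyz.1 hyz.2
  obtain ⟨hy', hz'⟩ := hsplit hyz'.1 hyz'.2
  simp only [Function.uncurry_apply_pair, sup_eq_union] at h
  exact Prod.ext (by rw [← hy, h, hy']) (by rw [← hz, h, hz'])

theorem bernoulliProb_eq_sum_powerset (hRT : R ⊆ T) (P : Finset α → Prop) :
    bernoulliProb p q T P = ∑ y ∈ R.powerset,
      bernoulliWeight p q R y * bernoulliProb p q (T \ R) (fun z => P (y ∪ z)) := by
  classical
  simp only [bernoulliProb, sum_filter, mul_sum, mul_ite, mul_zero]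
  rw [sum_powerset_eq_sum_powerset_sdiff hRT]
  refine sum_congr rfl fun y hy => sum_congr rfl fun z hz => ?_
  rw [bernoulliWeight_union hRT (mem_powerset.1 hy) (mem_powerset.1 hz)]

theorem bernoulliProb_false : bernoulliProb p q T (fun _ => False) = 0 := by
  simp [bernoulliProb]

theorem mul_le_bernoulliProb_of_forall (hp : 0 ≤ p) (hq : 0 ≤ q) (hRT : R ⊆ T)
    {E : Finset α → Prop} {c : ℝ}
    (h : ∀ y ⊆ R, E y → c ≤ bernoulliProb p q (T \ R) (fun z => P (y ∪ z))) :
    bernoulliProb p q R E * c ≤ bernoulliProb p q T P := by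
  classical
  rw [bernoulliProb, sum_mul, bernoulliProb_eq_sum_powerset hRT]
  calc ∑ y ∈ R.powerset with E y, bernoulliWeight p q R y * c
      ≤ ∑ y ∈ R.powerset with E y,
          bernoulliWeight p q R y * bernoulliProb p q (T \ R) (fun z => P (y ∪ z)) := by
        refine sum_le_sum fun y hy =>
          mul_le_mul_of_nonneg_left ?_ (bernoulliWeight_nonneg hp hq _ _)
        obtain ⟨hy, hE⟩ := mem_filter.1 hy
        exact h y (mem_powerset.1 hy) hE
    _ ≤ _ := sum_le_sum_of_subset_of_nonneg (filter_subset _ _) fun y _ _ =>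
        mul_nonneg (bernoulliWeight_nonneg hp hq _ _) (bernoulliProb_nonneg hp hq _ _)

theorem bernoulliProb_or_add_and :
    bernoulliProb p q T (fun x => P x ∨ Q x) + bernoulliProb p q T (fun x => P x ∧ Q x) =
      bernoulliProb p q T P + bernoulliProb p q T Q := by
  classical
  simp only [bernoulliProb, sum_filter, ← sum_add_distrib]
  refine sum_congr rfl fun x _ => ?_
  by_cases hP : P x <;> by_cases hQ : Q x <;> simp [hP, hQ]

theorem bernoulliProb_not (hpq : p + q = 1) :
    bernoulliProb p q T (fun x => ¬P x) = 1 - bernoulliProb p q T P := by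
  have h := bernoulliProb_or_add_and (p := p) (q := q) (T := T) (P := P) (Q := fun x => ¬P x)
  rw [bernoulliProb_congr (Q := fun _ => True) (fun x _ => iff_true_intro (em _)),
    bernoulliProb_congr (Q := fun _ => False) (fun x _ => iff_false_intro and_not_self),
    bernoulliProb_true hpq, bernoulliProb_false] at h
  linarith

theorem bernoulliProb_disjoint (hpq : p + q = 1) (hRT : R ⊆ T) :
    bernoulliProb p q T (Disjoint · R) = q ^ #R := by
  rw [bernoulliProb_eq_sum_powerset hRT, sum_eq_single ∅]
  · rw [bernoulliProb_congr (Q := fun _ => True), bernoulliProb_true hpq]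
    · simp [bernoulliWeight]
    exact fun z hz =>
      iff_true_intro (by simpa using disjoint_of_subset_left hz disjoint_sdiff_self_left)
  · intro y hy hne
    rw [bernoulliProb_congr (Q := fun _ => False), bernoulliProb_false, mul_zero]
    intro z _
    simp only [disjoint_union_left, iff_false, not_and]
    intro hyR
    exact absurd ((disjoint_self_iff_empty _).1 (disjoint_of_subset_right (mem_powerset.1 hy) hyR))
      hne
  · simp

theorem bernoulliProb_and_disjoint (hpq : p + q = 1) (c : Prop) [Decidable c] (hRT : R ⊆ T) :
    bernoulliProb p q T (fun x => c ∧ Disjoint x R) = if c then q ^ #R else 0 := by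
  by_cases hc : c
  · simpa only [hc, true_and, if_true] using bernoulliProb_disjoint hpq hRT
  · simpa only [hc, false_and, if_false] using bernoulliProb_false

/-- An instance of Harris' inequality: both events are increasing. -/
theorem mul_le_bernoulliProb_meets_and_meets (hp : 0 ≤ p) (hq : 0 ≤ q) (hpq : p + q = 1)
    (c₁ c₂ : Prop) [Decidable c₁] [Decidable c₂] {R₁ R₂ : Finset α} (h₁ : R₁ ⊆ T) (h₂ : R₂ ⊆ T) :
    (if c₁ then 1 - q ^ #R₁ else 1) * (if c₂ then 1 - q ^ #R₂ else 1) ≤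
      bernoulliProb p q T (fun x => (c₁ → ¬Disjoint x R₁) ∧ (c₂ → ¬Disjoint x R₂)) := by
  have hmiss := bernoulliProb_or_add_and (p := p) (q := q) (T := T)
    (P := fun x => c₁ ∧ Disjoint x R₁) (Q := fun x => c₂ ∧ Disjoint x R₂)
  rw [bernoulliProb_and_disjoint hpq c₁ h₁, bernoulliProb_and_disjoint hpq c₂ h₂,
    bernoulliProb_congr (P := fun x => (c₁ ∧ Disjoint x R₁) ∧ c₂ ∧ Disjoint x R₂)
      (Q := fun x => (c₁ ∧ c₂) ∧ Disjoint x (R₁ ∪ R₂))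
      (fun x _ => by rw [disjoint_union_right]; tauto),
    bernoulliProb_and_disjoint hpq _ (union_subset h₁ h₂)] at hmiss
  rw [bernoulliProb_congr (Q := fun x => ¬((c₁ ∧ Disjoint x R₁) ∨ (c₂ ∧ Disjoint x R₂)))
    (fun x _ => by tauto), bernoulliProb_not hpq]
  have hpow : q ^ #R₁ * q ^ #R₂ ≤ q ^ #(R₁ ∪ R₂) := by
    rw [← pow_add]
    exact pow_le_pow_of_le_one hq (by linarith) (card_union_le _ _)
  split_ifs at hmiss ⊢ <;> first | tauto | nlinarith

end Bernoulli

theorem setOf_filter_eq {Ω ι : Type*} [DecidableEq ι] {C : ι → Ω → Bool} {S x : Finset ι}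
    (hx : x ⊆ S) : {ω | {e ∈ S | C e ω} = x} = ⋂ e ∈ S, C e ⁻¹' {decide (e ∈ x)} := by
  ext ω
  simp only [Set.mem_ofPred_eq, Set.mem_iInter, Set.mem_preimage, Set.mem_singleton_iff,
    Finset.ext_iff, mem_filter]
  refine ⟨fun h e he => ?_, fun h e => ?_⟩
  · simp [← h e, he]
  · by_cases he : e ∈ S
    · simp [he, h e he]
    · simpa [he] using fun h' => he (hx h')

section Measure

variable {Ω ι : Type*} [MeasurableSpace Ω] {μ : Measure Ω} [IsProbabilityMeasure μ]
  [DecidableEq ι] {C : ι → Ω → Bool} {p : ℝ}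

theorem measure_setOf_filter_eq (hmeas : ∀ e, Measurable (C e)) (hind : iIndepFun C μ)
    (hBer : ∀ e, μ {ω | C e ω = true} = ENNReal.ofReal p) (hp : 0 ≤ p) (hp1 : p ≤ 1)
    {S x : Finset ι} (hx : x ⊆ S) :
    μ {ω | {e ∈ S | C e ω} = x} = ENNReal.ofReal (bernoulliWeight p (1 - p) S x) := by
  have hcoord (e : ι) :
      μ (C e ⁻¹' {decide (e ∈ x)}) = ENNReal.ofReal (if e ∈ x then p else 1 - p) := by
    by_cases he : e ∈ x
    · rw [decide_eq_true he, if_pos he]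
      exact hBer e
    · have hfalse : C e ⁻¹' {false} = {ω | C e ω = true}ᶜ := by ext; simp
      have htrue : MeasurableSet {ω | C e ω = true} := hmeas e (measurableSet_singleton true)
      rw [decide_eq_false he, if_neg he, hfalse, prob_compl_eq_one_sub htrue, hBer e,
        ENNReal.ofReal_sub _ hp, ENNReal.ofReal_one]
  rw [setOf_filter_eq hx, hind.meas_biInter fun e _ => ⟨_, measurableSet_singleton _, rfl⟩,
    bernoulliWeight, ENNReal.ofReal_prod_of_nonneg fun e _ => by split_ifs <;> linarith]
  exact prod_congr rfl fun e _ => hcoord e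

theorem measure_setOf_filter_eq_bernoulliProb (hmeas : ∀ e, Measurable (C e))
    (hind : iIndepFun C μ) (hBer : ∀ e, μ {ω | C e ω = true} = ENNReal.ofReal p) (hp : 0 ≤ p)
    (hp1 : p ≤ 1) (S : Finset ι) (P : Finset ι → Prop) :
    μ {ω | P {e ∈ S | C e ω}} = ENNReal.ofReal (bernoulliProb p (1 - p) S P) := by
  classical
  have hpre : {ω | P {e ∈ S | C e ω}} =
      (fun ω => {e ∈ S | C e ω}) ⁻¹' ↑{x ∈ S.powerset | P x} := by
    ext ω
    simp [filter_subset]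
  rw [hpre, ← sum_measure_preimage_singleton, bernoulliProb, ENNReal.ofReal_sum_of_nonneg]
  · exact sum_congr rfl fun x hx => measure_setOf_filter_eq hmeas hind hBer hp hp1
      (mem_powerset.1 (mem_filter.1 hx).1)
  · exact fun x _ => bernoulliWeight_nonneg hp (by linarith) S x
  · intro x hx
    change MeasurableSet {ω | {e ∈ S | C e ω} = x}
    rw [setOf_filter_eq (mem_powerset.1 (mem_filter.1 hx).1)]
    exact MeasurableSet.biInter S.countable_toSet fun e _ => hmeas e (measurableSet_singleton _)

end Measure

variable {p q : ℝ}

def perfectProb (q : ℝ) (n : ℕ) : ℝ := ∏ k ∈ Icc 1 n, (1 - q ^ k)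

theorem perfectProb_nonneg (hq : 0 ≤ q) (hq1 : q ≤ 1) (n : ℕ) : 0 ≤ perfectProb q n :=
  prod_nonneg fun _ _ => sub_nonneg.2 (pow_le_one₀ hq hq1)

theorem mul_perfectProb_card_erase {A B : Finset ℤ} (hAB : #A = #B) (a : ℤ) :
    (if a ∈ A then 1 - q ^ #B else 1) * perfectProb q #(A.erase a) = perfectProb q #A := by
  by_cases ha : a ∈ A
  · obtain ⟨n, hn⟩ : ∃ n, #A = n + 1 := ⟨_, (card_erase_add_one ha).symm⟩
    rw [if_pos ha, ← hAB, card_erase_of_mem ha, hn, perfectProb, perfectProb,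
      prod_Icc_succ_top (by omega), Nat.add_sub_cancel, mul_comm]
  · rw [if_neg ha, one_mul, erase_eq_of_notMem ha]

variable {a : ℤ} {A B : Finset ℤ}

theorem partners_nonempty_iff {x : Finset (ℤ × ℤ)} :
    (partners (Function.curry (· ∈ x)) a B).Nonempty ↔ ¬Disjoint x ({a} ×ˢ B) := by
  simp only [not_disjoint_iff, Finset.Nonempty, mem_partners, mem_product, mem_singleton]
  constructor
  · rintro ⟨j, hj, hx⟩
    exact ⟨(a, j), hx, rfl, hj⟩
  · rintro ⟨⟨i, j⟩, hx, rfl, hj⟩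
    exact ⟨j, hj, hx⟩

theorem greedyPerfect_union_iff {y z : Finset (ℤ × ℤ)} (ha : a ∈ upperBounds (A : Set ℤ))
    (hy : ∀ e ∈ y, e.1 = a) (hz : ∀ e ∈ z, e.1 ≠ a) :
    GreedyPerfect (Function.curry (· ∈ y ∪ z)) A B ↔ (a ∈ A → ¬Disjoint y ({a} ×ˢ B)) ∧
      GreedyPerfect (Function.curry (· ∈ z)) (A.erase a)
        (remainingFemales (Function.curry (· ∈ y)) a A B) := by
  have hrow : partners (Function.curry (· ∈ y ∪ z)) a B = partners (Function.curry (· ∈ y)) a B :=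
    partners_congr fun j _ => by simpa using fun h => absurd rfl (hz (a, j) h)
  rw [greedyPerfect_iff_remainingFemales ha (E' := Function.curry (· ∈ z)),
    remainingFemales_congr hrow, hrow, partners_nonempty_iff]
  intro i hi j
  simpa using fun h => absurd (hy (i, j) h) hi

theorem card_erase_add_card_erase_lt {α : Type*} [DecidableEq α] {s t : Finset α} {a : α}
    (ha : a ∈ s ∪ t) : #(s.erase a) + #(t.erase a) < #s + #t := by
  have hs := card_erase_le (s := s) (a := a)
  have ht := card_erase_le (s := t) (a := a)
  rcases mem_union.1 ha with h | h
  · have := card_erase_lt_of_mem h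
    omega
  · have := card_erase_lt_of_mem h
    omega

theorem perfectProb_mul_le_bernoulliProb (hp : 0 ≤ p) (hq : 0 ≤ q) (hpq : p + q = 1)
    {A B A' B' : Finset ℤ} (hAB : #A = #B) (hAB' : #A' = #B') {T : Finset (ℤ × ℤ)}
    (hT : (A ∪ A') ×ˢ (B ∪ B') ⊆ T) :
    perfectProb q #A * perfectProb q #A' ≤ bernoulliProb p q T (fun x =>
      GreedyPerfect (Function.curry (· ∈ x)) A B ∧
        GreedyPerfect (Function.curry (· ∈ x)) A' B') := by
  obtain hAA' | hAA' := (A ∪ A').eq_empty_or_nonempty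
  · obtain ⟨rfl, rfl⟩ := union_eq_empty.1 hAA'
    simp [perfectProb, greedyPerfect_empty, bernoulliProb_true hpq]
  have hq1 : q ≤ 1 := by linarith
  set a := (A ∪ A').max' hAA'
  have ha : a ∈ A ∪ A' := max'_mem _ _
  have hmax : ∀ i ∈ A ∪ A', i ≤ a := fun i hi => le_max' _ i hi
  set R := T.filter (·.1 = a)
  have hrow {B₀ : Finset ℤ} (h : B₀ ⊆ B ∪ B') : {a} ×ˢ B₀ ⊆ R := by
    rintro ⟨i, j⟩ he
    obtain ⟨hi, hj⟩ := mem_product.1 he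
    obtain rfl : i = a := mem_singleton.1 hi
    exact mem_filter.2 ⟨hT (mem_product.2 ⟨ha, h hj⟩), rfl⟩
  have hrest : ((A ∪ A').erase a) ×ˢ (B ∪ B') ⊆ T \ R := by
    rintro ⟨i, j⟩ he
    obtain ⟨hi, hj⟩ := mem_product.1 he
    exact mem_sdiff.2 ⟨hT (mem_product.2 ⟨mem_of_mem_erase hi, hj⟩),
      fun h => ne_of_mem_erase hi (mem_filter.1 h).2⟩
  calc perfectProb q #A * perfectProb q #A'
      = ((if a ∈ A then 1 - q ^ #({a} ×ˢ B) else 1) *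
          (if a ∈ A' then 1 - q ^ #({a} ×ˢ B') else 1)) *
          (perfectProb q #(A.erase a) * perfectProb q #(A'.erase a)) := by
        rw [card_product, card_product, card_singleton, one_mul, one_mul,
          ← mul_perfectProb_card_erase hAB a, ← mul_perfectProb_card_erase hAB' a]
        ring
    _ ≤ bernoulliProb p q R (fun y =>
          (a ∈ A → ¬Disjoint y ({a} ×ˢ B)) ∧ (a ∈ A' → ¬Disjoint y ({a} ×ˢ B'))) *
          (perfectProb q #(A.erase a) * perfectProb q #(A'.erase a)) := by
        gcongr
        · exact mul_nonneg (perfectProb_nonneg hq hq1 _) (perfectProb_nonneg hq hq1 _)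
        · exact mul_le_bernoulliProb_meets_and_meets hp hq hpq _ _ (hrow subset_union_left)
            (hrow subset_union_right)
    _ ≤ _ := by
        refine mul_le_bernoulliProb_of_forall hp hq (filter_subset _ T) fun y hy htop => ?_
        have hy_row : ∀ e ∈ y, e.1 = a := fun e he => (mem_filter.1 (hy he)).2
        have hz_row {z : Finset (ℤ × ℤ)} (hz : z ⊆ T \ R) : ∀ e ∈ z, e.1 ≠ a :=
          fun e he h => (mem_sdiff.1 (hz he)).2 (mem_filter.2 ⟨(mem_sdiff.1 (hz he)).1, h⟩)
        rw [bernoulliProb_congr fun z hz => by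
          rw [greedyPerfect_union_iff (fun i hi => hmax i (mem_union_left _ hi)) hy_row
              (hz_row hz),
            greedyPerfect_union_iff (fun i hi => hmax i (mem_union_right _ hi)) hy_row
              (hz_row hz),
            and_iff_right htop.1, and_iff_right htop.2]]
        exact perfectProb_mul_le_bernoulliProb hp hq hpq
          (card_remainingFemales hAB fun h => partners_nonempty_iff.2 (htop.1 h)).symm
          (card_remainingFemales hAB' fun h => partners_nonempty_iff.2 (htop.2 h)).symm
          ((product_subset_product (erase_union_distrib _ _ _).symm.subset
            (union_subset_union remainingFemales_subset remainingFemales_subset)).trans hrest)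
termination_by #A + #A'
decreasing_by exact card_erase_add_card_erase_lt ha

end StableMatching

open Finset MeasureTheory ProbabilityTheory StableMatching in
theorem stable_matchings_both_perfect_correlation_general
    {Ω : Type*} [MeasurableSpace Ω] (μ : Measure Ω) [IsProbabilityMeasure μ]
    (p q : ℝ) (hp0 : 0 < p) (hp1 : p ≤ 1) (hq : q = 1 - p)
    (C : ℤ × ℤ → Ω → Bool) (hmeas : ∀ e, Measurable (C e))
    (hind : iIndepFun C μ)
    (hBer : ∀ e, μ {ω | C e ω = true} = ENNReal.ofReal p)
    (A B A' B' : Finset ℤ)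
    (hAB : A.card = B.card) (hAB' : A'.card = B'.card) :
    ENNReal.ofReal ((∏ k ∈ Finset.Icc 1 A.card, (1 - q ^ k)) *
        ∏ k ∈ Finset.Icc 1 A'.card, (1 - q ^ k))
      ≤ μ ({ω | ∃ M : Finset (ℤ × ℤ),
              IsStableBipMatching (fun i j => C (i, j) ω = true) A B M ∧
              IsPerfectBipMatching A B M} ∩
           {ω | ∃ M : Finset (ℤ × ℤ),
              IsStableBipMatching (fun i j => C (i, j) ω = true) A' B' M ∧
              IsPerfectBipMatching A' B' M}) := by
  subst hq
  set S := (A ∪ A') ×ˢ (B ∪ B')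
  have hstable {A₀ B₀ : Finset ℤ} (hA₀ : A₀ ⊆ A ∪ A') (hB₀ : B₀ ⊆ B ∪ B') (hcard : #A₀ = #B₀)
      (ω : Ω) (h : GreedyPerfect (Function.curry (· ∈ {e ∈ S | C e ω})) A₀ B₀) :
      ∃ M, IsStableBipMatching (fun i j => C (i, j) ω = true) A₀ B₀ M ∧
        IsPerfectBipMatching A₀ B₀ M := by
    refine exists_isStable_isPerfect_of_greedyPerfect hcard ((greedyPerfect_congr ?_).1 h)
    intro i hi j hj
    have hS : (i, j) ∈ S := mem_product.2 ⟨hA₀ hi, hB₀ hj⟩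
    simp [hS]
  calc _ ≤ ENNReal.ofReal (bernoulliProb p (1 - p) S fun x =>
          GreedyPerfect (Function.curry (· ∈ x)) A B ∧
            GreedyPerfect (Function.curry (· ∈ x)) A' B') :=
        ENNReal.ofReal_le_ofReal (perfectProb_mul_le_bernoulliProb hp0.le (by linarith) (by ring)
          hAB hAB' subset_rfl)
    _ = μ {ω | GreedyPerfect (Function.curry (· ∈ {e ∈ S | C e ω})) A B ∧
          GreedyPerfect (Function.curry (· ∈ {e ∈ S | C e ω})) A' B'} :=
        (measure_setOf_filter_eq_bernoulliProb hmeas hind hBer hp0.le hp1 S _).symm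
    _ ≤ _ := by
        refine measure_mono fun ω ⟨h, h'⟩ => ⟨?_, ?_⟩
        exacts [hstable subset_union_left subset_union_left hAB ω h,
          hstable subset_union_right subset_union_right hAB' ω h']

/-- The events that the stable matchings of two pairs of finite sets are perfect are
positively correlated:
`P(σ_{A,B}, σ_{A',B'} both perfect) ≥ ∏_{k=1}^{|A|}(1-q^k) ∏_{k=1}^{|A'|}(1-q^k)`. -/
theorem stable_matchings_both_perfect_correlation
    {Ω : Type*} [MeasurableSpace Ω] (μ : Measure Ω) [IsProbabilityMeasure μ]
    (p q : ℝ) (hp0 : 0 < p) (hp1 : p ≤ 1) (hq : q = 1 - p)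
    (C : ℤ × ℤ → Ω → Bool) (hmeas : ∀ e, Measurable (C e))
    (hind : iIndepFun C μ)
    (hBer : ∀ e, μ {ω | C e ω = true} = ENNReal.ofReal p)
    (A B A' B' : Finset ℤ) (hA : A.Nonempty) (hA' : A'.Nonempty)
    (hAB : A.card = B.card) (hAB' : A'.card = B'.card) :
    ENNReal.ofReal ((∏ k ∈ Finset.Icc 1 A.card, (1 - q ^ k)) *
        ∏ k ∈ Finset.Icc 1 A'.card, (1 - q ^ k))
      ≤ μ ({ω | ∃ M : Finset (ℤ × ℤ),
              IsStableBipMatching (fun i j => C (i, j) ω = true) A B M ∧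
              IsPerfectBipMatching A B M} ∩
           {ω | ∃ M : Finset (ℤ × ℤ),
              IsStableBipMatching (fun i j => C (i, j) ω = true) A' B' M ∧
              IsPerfectBipMatching A' B' M}) :=
  stable_matchings_both_perfect_correlation_general μ p q hp0 hp1 hq C hmeas hind hBer A B A' B' hAB
    hAB'
end

section
/- Let σ be a bijection ℤ → ℤ whose flow L₊(σ,i+1/2) − L₋(σ,i+1/2) is finite. If this quantity is finite for one value of i, then it is finite for all i; moreover, local finiteness at one value of i implies local finiteness at every value of i. -/
/-!
Moving the cut from `i + 1/2` to `k + 1/2` can only create or destroy crossings `j ↦ σ j`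
for which `j` or `σ j` lies between `i` and `k`; there are finitely many such `j`,
since `σ` is injective and intervals of `ℤ` are finite.
-/

open Set Function

section Crossings

variable {α : Type*} [LinearOrder α]

theorem setOf_le_lt_apply_subset (f : α → α) (i k : α) :
    {j | j ≤ k ∧ k < f j} ⊆ {j | j ≤ i ∧ i < f j} ∪ Ioc i k ∪ f ⁻¹' Ioc k i := by
  rintro j ⟨hjk, hkf⟩
  grind

theorem setOf_lt_apply_le_subset (f : α → α) (i k : α) :
    {j | k < j ∧ f j ≤ k} ⊆ {j | i < j ∧ f j ≤ i} ∪ Ioc k i ∪ f ⁻¹' Ioc i k := by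
  rintro j ⟨hkj, hfk⟩
  grind

variable [LocallyFiniteOrder α] {f : α → α}

theorem Set.Finite.setOf_le_lt_apply (hf : Injective f) {i : α}
    (h : {j | j ≤ i ∧ i < f j}.Finite) (k : α) : {j | j ≤ k ∧ k < f j}.Finite :=
  ((h.union (finite_Ioc i k)).union ((finite_Ioc k i).preimage hf.injOn)).subset
    (setOf_le_lt_apply_subset f i k)

theorem Set.Finite.setOf_lt_apply_le (hf : Injective f) {i : α}
    (h : {j | i < j ∧ f j ≤ i}.Finite) (k : α) : {j | k < j ∧ f j ≤ k}.Finite :=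
  ((h.union (finite_Ioc k i)).union ((finite_Ioc i k).preimage hf.injOn)).subset
    (setOf_lt_apply_le_subset f i k)

end Crossings

/-- For a bijection `σ : ℤ → ℤ`, local finiteness at one value of `i` (finitely many
edges crossing `i + 1/2` in each direction) implies local finiteness at every value. -/
theorem locally_finite_of_locally_finite_at (σ : ℤ ≃ ℤ) (i : ℤ)
    (hplus : {j : ℤ | j ≤ i ∧ i < σ j}.Finite) (hminus : {j : ℤ | i < j ∧ σ j ≤ i}.Finite) :
    ∀ k : ℤ, {j : ℤ | j ≤ k ∧ k < σ j}.Finite ∧ {j : ℤ | k < j ∧ σ j ≤ k}.Finite := fun k =>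
  ⟨hplus.setOf_le_lt_apply σ.injective k, hminus.setOf_lt_apply_le σ.injective k⟩
end

section
/- Let σ be a locally finite perfect matching (bijection) of ℤ, and suppose T < T' are consecutive cuts of σ, i.e., both T + 1/2 and T' + 1/2 are cuts of σ. Then for every j with T ≤ j ≤ T', the maximum length M(σ, j+1/2) of an edge crossing j + 1/2 satisfies M(σ, j+1/2) ≤ T' − T. -/
/-!
Between two cuts the block `(T, T']` is mapped onto itself by `σ`. An edge crossing `j + 1/2`
with `T ≤ j ≤ T'` has an endpoint in that block, hence both endpoints, so it is shorter than
the block.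
-/

theorem apply_mem_Ioc_iff_of_cuts {α : Type*} [LinearOrder α] {f : α → α} {T T' : α}
    (hT : ∀ j, f j ≤ T ↔ j ≤ T) (hT' : ∀ j, f j ≤ T' ↔ j ≤ T') (k : α) :
    f k ∈ Set.Ioc T T' ↔ k ∈ Set.Ioc T T' := by
  simp only [Set.mem_Ioc, ← not_le, hT, hT']

theorem crossing_edge_length_le_of_cuts_general (σ : ℤ ≃ ℤ) (T T' : ℤ)
    (hT : ∀ j : ℤ, σ j ≤ T ↔ j ≤ T) (hT' : ∀ j : ℤ, σ j ≤ T' ↔ j ≤ T') :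
    ∀ j : ℤ, T ≤ j → j ≤ T' →
      ∀ k : ℤ, ((k ≤ j ∧ j < σ k) ∨ (σ k ≤ j ∧ j < k)) → |σ k - k| ≤ T' - T := by
  intro j hTj hjT' k hcross
  have hk : k ∈ Set.Ioc T T' := by
    have := hT k
    have := hT' k
    constructor <;> omega
  have hσk := (apply_mem_Ioc_iff_of_cuts hT hT' k).mpr hk
  rw [abs_le]
  constructor <;> linarith [hk.1, hk.2, hσk.1, hσk.2]

/-- If `T + 1/2` and `T' + 1/2` are both cuts of a bijection `σ : ℤ → ℤ` with `T < T'`,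
then every edge of `σ` crossing `j + 1/2` for `T ≤ j ≤ T'` has length at most `T' − T`;
that is, `M(σ, j + 1/2) ≤ T' − T`. -/
theorem crossing_edge_length_le_of_cuts (σ : ℤ ≃ ℤ) (T T' : ℤ) (hTT' : T < T')
    (hT : ∀ j : ℤ, σ j ≤ T ↔ j ≤ T) (hT' : ∀ j : ℤ, σ j ≤ T' ↔ j ≤ T') :
    ∀ j : ℤ, T ≤ j → j ≤ T' →
      ∀ k : ℤ, ((k ≤ j ∧ j < σ k) ∨ (σ k ≤ j ∧ j < k)) → |σ k - k| ≤ T' - T :=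
  crossing_edge_length_le_of_cuts_general σ T T' hT hT'
end

section
/- Let p ∈ (0,1], let n' ≤ n be integers, let m ≥ 0, and let σ and σ' be the unique stable matchings of the random bipartite graphs K_{(-∞,m],(-∞,m+n]}(p) and K_{(-∞,m],(-∞,m+n']}(p) respectively (same underlying compatibility randomness). Then almost surely σ'(i) ≤ σ(i) for every i ≤ m, and σ'⁻¹(j) ≥ σ⁻¹(j) for every j ≤ m + n' (with the convention -∞ ≤ k). That is, when the pool of females is enlarged, no male does worse and no female does better. -/
/-- Male `i` does strictly better in `M'` than in `M`; being unmatched in `M` counts as `-∞`. -/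
def ImprovesOn (M' M : Finset (ℤ × ℤ)) (i : ℤ) : Prop :=
  ∃ j', (i, j') ∈ M' ∧ ∀ j, (i, j) ∈ M → j < j'

section

variable {E : ℤ → ℤ → Prop} {A B B' : Finset ℤ} {M M' : Finset (ℤ × ℤ)} {i j : ℤ}

namespace IsBipMatching

theorem mem_left (hM : IsBipMatching E A B M) (h : (i, j) ∈ M) : i ∈ A :=
  (hM.1 _ h).1

theorem mem_right (hM : IsBipMatching E A B M) (h : (i, j) ∈ M) : j ∈ B :=
  (hM.1 _ h).2.1

theorem adj (hM : IsBipMatching E A B M) (h : (i, j) ∈ M) : E i j :=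
  (hM.1 _ h).2.2

theorem right_unique (hM : IsBipMatching E A B M) {j' : ℤ} (h : (i, j) ∈ M)
    (h' : (i, j') ∈ M) : j = j' :=
  congrArg Prod.snd (hM.2.1 _ h _ h' rfl)

theorem left_unique (hM : IsBipMatching E A B M) {i' : ℤ} (h : (i, j) ∈ M)
    (h' : (i', j) ∈ M) : i = i' :=
  congrArg Prod.fst (hM.2.2 _ h _ h' rfl)

end IsBipMatching

namespace IsStableBipMatching

theorem exists_right_ge (hM : IsStableBipMatching E A B M) (hi : i ∈ A) (hj : j ∈ B)
    (hij : E i j) (h : ∀ i', (i', j) ∈ M → i' < i) : ∃ j', (i, j') ∈ M ∧ j ≤ j' := by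
  by_contra! hlt
  exact hM.2 ⟨i, hi, j, hj, hij, hlt, h⟩

theorem exists_left_ge (hM : IsStableBipMatching E A B M) (hi : i ∈ A) (hj : j ∈ B)
    (hij : E i j) (h : ∀ j', (i, j') ∈ M → j' < j) : ∃ i', (i', j) ∈ M ∧ i ≤ i' := by
  by_contra! hlt
  exact hM.2 ⟨i, hi, j, hj, hij, h, hlt⟩

theorem exists_right_gt (hM : IsStableBipMatching E A B M) (hi : i ∈ A) (hj : j ∈ B)
    (hij : E i j) (h : ∀ i', (i', j) ∈ M → i' < i) :
    ∃ j₁, (i, j₁) ∈ M ∧ j < j₁ := by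
  obtain ⟨j₁, hj₁, hle⟩ := hM.exists_right_ge hi hj hij h
  refine ⟨j₁, hj₁, lt_of_le_of_ne hle ?_⟩
  rintro rfl
  exact (h i hj₁).false

theorem exists_improvesOn_gt (hM : IsStableBipMatching E A B M)
    (hM' : IsStableBipMatching E A B' M') (hB : B' ⊆ B) (hi : ImprovesOn M' M i) :
    ∃ i₁, i < i₁ ∧ ImprovesOn M' M i₁ := by
  obtain ⟨j', hij', hlt⟩ := hi
  have hj' : j' ∈ B' := hM'.1.mem_right hij'
  obtain ⟨i₁, hi₁j', hle⟩ :=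
    hM.exists_left_ge (hM'.1.mem_left hij') (hB hj') (hM'.1.adj hij') hlt
  have hii₁ : i < i₁ := lt_of_le_of_ne hle fun hi => (hlt j' (hi ▸ hi₁j')).false
  have hj'_taken : ∀ i', (i', j') ∈ M' → i' < i₁ := fun i' h' =>
    (hM'.1.left_unique hij' h') ▸ hii₁
  obtain ⟨j₁, hi₁j₁, hj'j₁⟩ :=
    hM'.exists_right_gt (hM.1.mem_left hi₁j') hj' (hM.1.adj hi₁j') hj'_taken
  exact ⟨i₁, hii₁, j₁, hi₁j₁, fun j hj => hM.1.right_unique hi₁j' hj ▸ hj'j₁⟩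

theorem not_improvesOn (hM : IsStableBipMatching E A B M)
    (hM' : IsStableBipMatching E A B' M') (hB : B' ⊆ B) (i : ℤ) : ¬ ImprovesOn M' M i := by
  classical
  intro hi
  set S := A.filter (ImprovesOn M' M)
  have hS : ∀ {i}, ImprovesOn M' M i → i ∈ S := fun hi =>
    Finset.mem_filter.mpr ⟨hM'.1.mem_left hi.choose_spec.1, hi⟩
  obtain ⟨i₁, hlt, hi₁⟩ :=
    hM.exists_improvesOn_gt hM' hB (Finset.mem_filter.mp (S.max'_mem ⟨i, hS hi⟩)).2
  exact (S.le_max' i₁ (hS hi₁)).not_gt hlt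

theorem le_of_mem_of_subset (hM : IsStableBipMatching E A B M)
    (hM' : IsStableBipMatching E A B' M') (hB : B' ⊆ B) {j' : ℤ} (h : (i, j') ∈ M') :
    ∃ j, (i, j) ∈ M ∧ j' ≤ j := by
  by_contra! hlt
  exact hM.not_improvesOn hM' hB i ⟨j', h, hlt⟩

theorem ge_of_mem_of_subset (hM : IsStableBipMatching E A B M)
    (hM' : IsStableBipMatching E A B' M') (hB : B' ⊆ B) (h : (i, j) ∈ M) (hj : j ∈ B') :
    ∃ i', (i', j) ∈ M' ∧ i ≤ i' := by
  by_contra! hlt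
  obtain ⟨j₁, hij₁, hjj₁⟩ := hM'.exists_right_gt (hM.1.mem_left h) hj (hM.1.adj h) hlt
  exact hM.not_improvesOn hM' hB i ⟨j₁, hij₁, fun j' h' => hM.1.right_unique h h' ▸ hjj₁⟩

end IsStableBipMatching

end

theorem stable_matching_monotone_in_female_pool_general
    (E : ℤ → ℤ → Prop) (a b m n n' : ℤ) (hnn' : n' ≤ n)
    (M M' : Finset (ℤ × ℤ))
    (hM : IsStableBipMatching E (Finset.Icc a m) (Finset.Icc b (m + n)) M)
    (hM' : IsStableBipMatching E (Finset.Icc a m) (Finset.Icc b (m + n')) M') :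
    (∀ i j', (i, j') ∈ M' → ∃ j, (i, j) ∈ M ∧ j' ≤ j) ∧
    (∀ i j, (i, j) ∈ M → j ≤ m + n' → ∃ i', (i', j) ∈ M' ∧ i ≤ i') := by
  have hB : Finset.Icc b (m + n') ⊆ Finset.Icc b (m + n) :=
    Finset.Icc_subset_Icc le_rfl (by linarith)
  refine ⟨fun i j' h => hM.le_of_mem_of_subset hM' hB h, fun i j h hj => ?_⟩
  exact hM.ge_of_mem_of_subset hM' hB h <|
    Finset.mem_Icc.mpr ⟨(Finset.mem_Icc.mp (hM.1.mem_right h)).1, hj⟩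

/-- Monotonicity of stable matchings in the female pool (finitary version): if `M` and `M'`
are stable matchings of the compatibility graphs with male interval `I = [a, m]` and female
intervals `J = [b, m + n]` and `J' = [b, m + n']` respectively, where `n' ≤ n`, then no male
does better in `M'` than in `M` (`σ'(i) ≤ σ(i)`, with unmatched treated as `-∞`), and no
female in `J'` does worse (`σ'⁻¹(j) ≥ σ⁻¹(j)`). -/
theorem stable_matching_monotone_in_female_pool
    (E : ℤ → ℤ → Prop) (a b m n n' : ℤ) (hm : 0 ≤ m) (hnn' : n' ≤ n)
    (M M' : Finset (ℤ × ℤ))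
    (hM : IsStableBipMatching E (Finset.Icc a m) (Finset.Icc b (m + n)) M)
    (hM' : IsStableBipMatching E (Finset.Icc a m) (Finset.Icc b (m + n')) M') :
    (∀ i j', (i, j') ∈ M' → ∃ j, (i, j) ∈ M ∧ j' ≤ j) ∧
    (∀ i j, (i, j) ∈ M → j ≤ m + n' → ∃ i', (i', j) ∈ M' ∧ i ≤ i') :=
  stable_matching_monotone_in_female_pool_general E a b m n n' hnn' M M' hM hM'
end
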